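/- arXiv:1707.08482 — 4 statements merged into one kernel-verified Lean document; each statement's English description precedes it below -/
import Mathlib

section
/- Let Ω and R be types, R' ⊆ R a set of block indices, B : R → Set Ω a family of blocks, view ⊆ Ω, and conf a set of subsets of Ω (the confidentiality policy). For s ⊆ Ω set I_s = {w ∈ R' | B w ∩ view ⊆ s}. Then the collection of violating sets of the security configuration, namely { I ⊆ R' | I ≠ ∅ and there exists s ∈ conf such that (⋃_{w ∈ I} B w) ∩ view ⊆ s and no I' ⊆ R' with I ⊊ I' satisfies (⋃_{w ∈ I'} B w) ∩ view ⊆ s }, is equal to { I_s | s ∈ conf and I_s ≠ ∅ }. -/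
/-- The violating sets of the security configuration coincide with the
nonempty sets `I_s = {w ∈ R' | B w ∩ view ⊆ s}` for `s ∈ conf`. -/
theorem stmt_1 {Ω R : Type*} (R' : Set R) (B : R → Set Ω) (view : Set Ω)
    (conf : Set (Set Ω)) :
    {I : Set R | I ⊆ R' ∧ I ≠ ∅ ∧ ∃ s ∈ conf,
        (⋃ w ∈ I, B w) ∩ view ⊆ s ∧
        ¬ ∃ I' : Set R, I' ⊆ R' ∧ I ⊂ I' ∧ (⋃ w ∈ I', B w) ∩ view ⊆ s} =
    {I : Set R | ∃ s ∈ conf, I = {w ∈ R' | B w ∩ view ⊆ s} ∧ I ≠ ∅} := by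
  have key : ∀ (I : Set R) (s : Set Ω),
      (⋃ w ∈ I, B w) ∩ view ⊆ s ↔ ∀ w ∈ I, B w ∩ view ⊆ s := by
    intro I s
    constructor
    · intro h w hw x hx
      exact h ⟨Set.mem_biUnion hw hx.1, hx.2⟩
    · rintro h x ⟨hx, hv⟩
      rcases Set.mem_iUnion₂.mp hx with ⟨w, hw, hxw⟩
      exact h w hw ⟨hxw, hv⟩
  ext I
  simp only [Set.mem_setOf_eq]
  constructor
  · rintro ⟨hIR, hne, s, hs, hsub, hmax⟩
    refine ⟨s, hs, ?_, ?_⟩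
    · apply Set.Subset.antisymm
      · intro w hw
        exact ⟨hIR hw, (key I s).mp hsub w hw⟩
      · by_contra hcon
        apply hmax
        refine ⟨{w ∈ R' | B w ∩ view ⊆ s}, fun w hw => hw.1, ?_, ?_⟩
        · exact ⟨fun w hw => ⟨hIR hw, (key I s).mp hsub w hw⟩, hcon⟩
        · exact (key _ s).mpr (fun w hw => hw.2)
    · intro h; exact hne h
  · rintro ⟨s, hs, rfl, hne⟩
    refine ⟨fun w hw => hw.1, hne, s, hs, (key _ s).mpr (fun w hw => hw.2), ?_⟩
    rintro ⟨I', hI'R, hssub, hsub'⟩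
    apply hssub.2
    intro w hw
    exact ⟨hI'R hw, (key I' s).mp hsub' w hw⟩
end

section
/- Let R be a type, R' ⊆ R, and vioSets a collection of subsets of R. Let G be a pairwise disjoint collection of nonempty subsets of R and let ρ assign to each g ∈ G an element ρ(g) ∈ g (a root). Assume that for every I ∈ vioSets there exists S ⊆ G with I ⊆ ⋃_{g ∈ S} g and such that for every g ∈ S it is not the case that g ∩ R' ⊆ I. Define D : R → R by D(w) = ρ(g) if w belongs to some (necessarily unique) g ∈ G, and D(w) = w otherwise. Then for every v ∈ R such that the set P_v = {w ∈ R' | D(w) = v} is nonempty, and for every I ∈ vioSets, it is not the case that P_v ⊆ I. -/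
/-- The generalization map `D` determined by a subtree generalization scheme
`G` with root assignment `ρ` satisfies requirement 2 of a distortion table: no `R'`-preimage
of an output value is contained in a violating set. -/
theorem stmt_4 {R : Type*} (R' : Set R) (vioSets : Set (Set R))
    (G : Set (Set R)) (ρ : Set R → R)
    (hne : ∀ g ∈ G, g.Nonempty)
    (hdisj : ∀ g₁ ∈ G, ∀ g₂ ∈ G, g₁ ≠ g₂ → g₁ ∩ g₂ = ∅)
    (hroot : ∀ g ∈ G, ρ g ∈ g)
    (hsel : ∀ I ∈ vioSets, ∃ S ⊆ G, I ⊆ ⋃₀ S ∧ ∀ g ∈ S, ¬ (g ∩ R' ⊆ I))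
    (D : R → R)
    (hD₁ : ∀ g ∈ G, ∀ w ∈ g, D w = ρ g)
    (hD₂ : ∀ w : R, (∀ g ∈ G, w ∉ g) → D w = w) :
    ∀ v : R, ({w ∈ R' | D w = v}).Nonempty →
      ∀ I ∈ vioSets, ¬ ({w ∈ R' | D w = v} ⊆ I) := by
  rintro v ⟨w₀, hw₀R', hw₀D⟩ I hI hsub
  have hw₀I : w₀ ∈ I := hsub ⟨hw₀R', hw₀D⟩
  obtain ⟨S, hSG, hcov, hbad⟩ := hsel I hI
  obtain ⟨g, hgS, hw₀g⟩ := hcov hw₀I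
  have hgG : g ∈ G := hSG hgS
  obtain ⟨x, ⟨hxg, hxR'⟩, hxI⟩ := Set.not_subset.mp (hbad g hgS)
  exact hxI (hsub ⟨hxR', by rw [hD₁ g hgG x hxg, ← hD₁ g hgG w₀ hw₀g, hw₀D]⟩)
end

section
/- Let Ω and E be types, o₀ : List E a fixed initial observation, and Σ a set of pairs (ι, o) with ι ∈ Ω and o : ℕ → List E, such that for every (ι, o) ∈ Σ one has o 0 = o₀ and, for every t, either o (t+1) = o t or o (t+1) = o t ++ [e] for some e ∈ E. Define the knowledge operator K by K o t = { ι' ∈ Ω | there exist o' and t' with (ι', o') ∈ Σ and o' t' = o t }. Then for every (ι, o) ∈ Σ and all times t₁ ≤ t₂, K o t₂ ⊆ K o t₁. -/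
private lemma step_prefix {E : Type*} (o : ℕ → List E)
    (h : ∀ t : ℕ, o (t + 1) = o t ∨ ∃ e : E, o (t + 1) = o t ++ [e]) :
    ∀ s t : ℕ, s ≤ t → o s <+: o t := by
  intro s t hst
  induction t with
  | zero => simp_all
  | succ n ih =>
    rcases Nat.lt_or_ge s (n+1) with h1 | h1
    · have hp := ih (Nat.lt_succ_iff.mp h1)
      rcases h n with he | ⟨e, he⟩
      · rwa [he]
      · rw [he]; exact hp.trans (List.prefix_append _ _)
    · have : s = n + 1 := le_antisymm hst h1
      subst this; exact List.prefix_rfl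

private lemma exists_len {E : Type*} (o : ℕ → List E)
    (h : ∀ t : ℕ, o (t + 1) = o t ∨ ∃ e : E, o (t + 1) = o t ++ [e]) :
    ∀ t n : ℕ, (o 0).length ≤ n → n ≤ (o t).length → ∃ s ≤ t, (o s).length = n := by
  intro t
  induction t with
  | zero => intro n h1 h2; exact ⟨0, le_refl 0, le_antisymm h1 h2⟩
  | succ m ih =>
    intro n h1 h2
    rcases Nat.lt_or_ge ((o m).length) n with hlt | hge
    · -- then o (m+1) must be longer, n = length o (m+1)
      rcases h m with he | ⟨e, he⟩
      · rw [he] at h2; omega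
      · refine ⟨m + 1, le_refl _, ?_⟩
        rw [he] at h2 ⊢; simp at h2 ⊢; omega
    · obtain ⟨s, hs, hn⟩ := ih n h1 hge
      exact ⟨s, hs.trans (Nat.le_succ m), hn⟩

/-- Monotonicity of the observer's knowledge: in a system of runs with
append-growing observation sequences starting from a fixed initial observation, the
knowledge set can only shrink over time. -/
theorem stmt_10 {Ω E : Type*} (o₀ : List E) (Sys : Set (Ω × (ℕ → List E)))
    (hSys : ∀ p ∈ Sys, p.2 0 = o₀ ∧
      ∀ t : ℕ, p.2 (t + 1) = p.2 t ∨ ∃ e : E, p.2 (t + 1) = p.2 t ++ [e])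
    (K : (ℕ → List E) → ℕ → Set Ω)
    (hK : ∀ (o : ℕ → List E) (t : ℕ),
      K o t = {ι' : Ω | ∃ (o' : ℕ → List E) (t' : ℕ), (ι', o') ∈ Sys ∧ o' t' = o t}) :
    ∀ p ∈ Sys, ∀ t₁ t₂ : ℕ, t₁ ≤ t₂ → K p.2 t₂ ⊆ K p.2 t₁ := by
  intro p hp t₁ t₂ h12 ι hι
  rw [hK] at hι ⊢
  obtain ⟨o', t', ho'Sys, ho'⟩ := hι
  obtain ⟨hp0, hpstep⟩ := hSys p hp
  obtain ⟨ho'0, ho'step⟩ : o' 0 = o₀ ∧ ∀ t : ℕ, o' (t + 1) = o' t ∨ ∃ e : E, o' (t + 1) = o' t ++ [e] := hSys _ ho'Sys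
  -- p.2 t₁ is a prefix of p.2 t₂ = o' t'
  have hpref : p.2 t₁ <+: p.2 t₂ := step_prefix p.2 hpstep t₁ t₂ h12
  have hlen0 : (p.2 0).length ≤ (p.2 t₁).length :=
    (step_prefix p.2 hpstep 0 t₁ (Nat.zero_le _)).length_le
  have hle : (o' 0).length ≤ (p.2 t₁).length := by
    rw [ho'0, ← hp0]; exact hlen0
  have hle2 : (p.2 t₁).length ≤ (o' t').length := by
    rw [ho']; exact hpref.length_le
  obtain ⟨s, hs, hlen⟩ := exists_len o' ho'step t' (p.2 t₁).length hle hle2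
  refine ⟨o', s, ho'Sys, ?_⟩
  have h1 : o' s <+: p.2 t₂ := by rw [← ho']; exact step_prefix o' ho'step s t' hs
  exact List.prefix_of_prefix_length_le h1 hpref (by rw [hlen])
    |>.eq_of_length hlen
end

section
/- Let Ω and R be types, R' ⊆ R a set of block indices, B : R → Set Ω a family of blocks, view ⊆ Ω, and K ⊆ Ω with K ⊆ view and K ⊆ ⋃_{w ∈ R'} B w. Let conf be a set of subsets of Ω such that for every s ∈ conf it is not the case that K ⊆ s. For s ∈ conf set I_s = {w ∈ R' | B w ∩ view ⊆ s}. Let D : R → R be a map and u ∈ R'; put g = D u and P = {w ∈ R' | D w = g}. Assume that for every s ∈ conf with I_s ≠ ∅ and I_s ≠ R', it is not the case that P ⊆ I_s. Then for every s ∈ conf, it is not the case that view ∩ ⋃_{w ∈ P} B w ⊆ s. -/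
/-- Key induction step of confidentiality preservation: if the generalization
map `D` satisfies the distortion-table requirement that the `R'`-preimage `P` of the output
value `D u` is contained in no violating set `I_s`, then the updated view
`view ∩ ⋃ w ∈ P, B w` is contained in no confidential piece of information. -/
theorem stmt_11 {Ω R : Type*} (R' : Set R) (B : R → Set Ω) (view K : Set Ω)
    (hKview : K ⊆ view) (hKblocks : K ⊆ ⋃ w ∈ R', B w)
    (conf : Set (Set Ω)) (hconf : ∀ s ∈ conf, ¬ (K ⊆ s))
    (D : R → R) (u : R) (hu : u ∈ R')
    (hD : ∀ s ∈ conf, {w ∈ R' | B w ∩ view ⊆ s} ≠ ∅ →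
        {w ∈ R' | B w ∩ view ⊆ s} ≠ R' →
        ¬ ({w ∈ R' | D w = D u} ⊆ {w ∈ R' | B w ∩ view ⊆ s})) :
    ∀ s ∈ conf, ¬ (view ∩ (⋃ w ∈ {w ∈ R' | D w = D u}, B w) ⊆ s) := by
  intro s hs hsub
  have hPI : {w ∈ R' | D w = D u} ⊆ {w ∈ R' | B w ∩ view ⊆ s} := by
    intro w hw
    refine ⟨hw.1, fun x hx => hsub ⟨hx.2, Set.mem_biUnion hw hx.1⟩⟩
  have hne : {w ∈ R' | B w ∩ view ⊆ s} ≠ ∅ := by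
    intro h
    have : u ∈ ({w ∈ R' | B w ∩ view ⊆ s} : Set R) := hPI ⟨hu, rfl⟩
    simp [h] at this
  have hnR : {w ∈ R' | B w ∩ view ⊆ s} ≠ R' := by
    intro h
    apply hconf s hs
    intro x hx
    obtain ⟨t, ⟨w, rfl⟩, ht⟩ := hKblocks hx
    simp only [Set.mem_iUnion] at ht
    obtain ⟨hwR, hxB⟩ := ht
    have : w ∈ ({w ∈ R' | B w ∩ view ⊆ s} : Set R) := by rw [h]; exact hwR
    exact this.2 ⟨hxB, hKview hx⟩
  exact hD s hs hne hnR hPI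
end
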